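/- Let e : D_R(0) → [0,∞) be continuous with ρ(r) = (R−|z|)² sup_{D_r} e maximized at r₀ = |z₀| with ρ(r₀) > 1/4, and let s² = 1/(16 e(z₀)). Then s < (R−|z₀|)/2, so the closed ball D_s(z₀) is contained in D_R(0), and for all y ∈ D_s(z₀) one has e(y) ≤ 4 e(z₀) = 1/(4s²). -/
import Mathlib


open Metric

/-- Continuity-argument step: if `ρ(r) = (R−r)² sup_{D_r(0)} e` is maximized over `[0,R]`
at `r₀ = ‖z₀‖` with `ρ(r₀) = (R−‖z₀‖)² e(z₀) > 1/4`, and `s² = 1/(16 e(z₀))` with `s > 0`,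
then `s < (R−‖z₀‖)/2`, the closed ball `D_s(z₀)` is contained in `D_R(0)`, and on
`D_s(z₀)` one has `e ≤ 4 e(z₀) = 1/(4s²)`. -/
theorem continuity_argument_step
    (R : ℝ) (hR : 0 < R) (e : EuclideanSpace ℝ (Fin 2) → ℝ)
    (he_cont : ContinuousOn e (closedBall 0 R))
    (he_nonneg : ∀ x ∈ closedBall (0 : EuclideanSpace ℝ (Fin 2)) R, 0 ≤ e x)
    (ρ : ℝ → ℝ)
    (hρ : ∀ r, ρ r = (R - r) ^ 2 * sSup (e '' closedBall (0 : EuclideanSpace ℝ (Fin 2)) r))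
    (z₀ : EuclideanSpace ℝ (Fin 2)) (hz₀ : z₀ ∈ closedBall (0 : EuclideanSpace ℝ (Fin 2)) R)
    (hmax : ∀ r ∈ Set.Icc (0 : ℝ) R, ρ r ≤ ρ ‖z₀‖)
    (hreal : ρ ‖z₀‖ = (R - ‖z₀‖) ^ 2 * e z₀)
    (hbig : 1 / 4 < ρ ‖z₀‖)
    (s : ℝ) (hs : 0 < s) (hs2 : s ^ 2 = 1 / (16 * e z₀)) :
    s < (R - ‖z₀‖) / 2 ∧
      closedBall z₀ s ⊆ closedBall (0 : EuclideanSpace ℝ (Fin 2)) R ∧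
      (∀ y ∈ closedBall z₀ s, e y ≤ 4 * e z₀) ∧
      4 * e z₀ = 1 / (4 * s ^ 2) := by
  have hz0R : ‖z₀‖ ≤ R := by simpa [dist_zero_right] using mem_closedBall.mp hz₀
  have hRz : 0 ≤ R - ‖z₀‖ := by linarith
  have hkey : 1 / 4 < (R - ‖z₀‖) ^ 2 * e z₀ := hreal ▸ hbig
  have he0 : 0 < e z₀ := by nlinarith [sq_nonneg (R - ‖z₀‖)]
  have hRzpos : 0 < R - ‖z₀‖ := by
    rcases hRz.lt_or_eq with h | h
    · exact h
    · exfalso; rw [← h] at hkey; norm_num at hkey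
  have hs2' : 16 * e z₀ * s ^ 2 = 1 := by
    field_simp at hs2; linarith
  have hslt : s < (R - ‖z₀‖) / 2 := by
    nlinarith [mul_pos he0 (show (0:ℝ) < 2 * s + (R - ‖z₀‖) by linarith)]
  have hsub : closedBall z₀ s ⊆ closedBall (0 : EuclideanSpace ℝ (Fin 2)) R := by
    apply closedBall_subset_closedBall'
    rw [dist_zero_right]
    linarith
  refine ⟨hslt, hsub, ?_, ?_⟩
  · intro y hy
    have hyR : y ∈ closedBall (0 : EuclideanSpace ℝ (Fin 2)) R := hsub hy
    have hyz : ‖y‖ ≤ ‖z₀‖ + s := by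
      have : ‖y - z₀‖ ≤ s := by simpa [dist_eq_norm] using mem_closedBall.mp hy
      calc ‖y‖ = ‖z₀ + (y - z₀)‖ := by rw [show z₀ + (y - z₀) = y from by abel]
        _ ≤ ‖z₀‖ + ‖y - z₀‖ := norm_add_le _ _
        _ ≤ ‖z₀‖ + s := by linarith
    have hyRle : ‖y‖ ≤ R := by linarith
    set S := sSup (e '' closedBall (0 : EuclideanSpace ℝ (Fin 2)) ‖y‖) with hS
    have hbdd : BddAbove (e '' closedBall (0 : EuclideanSpace ℝ (Fin 2)) ‖y‖) :=
      (isCompact_closedBall 0 ‖y‖).bddAbove_image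
        (he_cont.mono (closedBall_subset_closedBall hyRle))
    have h1 : e y ≤ S :=
      le_csSup hbdd ⟨y, by simp [mem_closedBall_zero_iff], rfl⟩
    have hS0 : 0 ≤ S := le_trans (he_nonneg y hyR) h1
    have h2 : (R - ‖y‖) ^ 2 * S ≤ (R - ‖z₀‖) ^ 2 * e z₀ := by
      have := hmax ‖y‖ ⟨norm_nonneg y, hyRle⟩
      rw [hρ ‖y‖, hreal] at this
      exact this
    have h3 : (R - ‖z₀‖) / 2 ≤ R - ‖y‖ := by linarith
    have hsq : ((R - ‖z₀‖) / 2) ^ 2 ≤ (R - ‖y‖) ^ 2 := by nlinarith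
    have h4 : ((R - ‖z₀‖) / 2) ^ 2 * S ≤ (R - ‖y‖) ^ 2 * S :=
      mul_le_mul_of_nonneg_right hsq hS0
    nlinarith [mul_pos hRzpos hRzpos]
  · have hs0 : s ≠ 0 := ne_of_gt hs
    field_simp
    linarith
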